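/- Let λ, μ, γ > 0 with λ² + μ²/γ > 1. Set q = (μ²/γ)/(λ² + μ²/γ), and for integer k let l = ⌊qk⌋. Then C(k,l)² ≥ c·(λ²)^{−(k−l)}·(μ²/γ)^{−l} for some constant c > 0 and all sufficiently large k, where C(k,l) is the binomial coefficient. -/

import Mathlib

open Finset Filter

lemma choose_entropy_lb (k l : ℕ) (hl : l ≤ k) :
    k ^ k ≤ (k + 1) * (k.choose l * l ^ l * (k - l) ^ (k - l)) := by
  set m := k - l with hm
  have hml : l + m = k := by omega
  set t : ℕ → ℕ := fun j => k.choose j * l ^ j * m ^ (k - j) with ht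
  have step_up : ∀ j, j < l → t j ≤ t (j + 1) := by
    intro j hj
    have hjk : j < k := lt_of_lt_of_le hj hl
    have hkey : k.choose j * m ≤ k.choose (j + 1) * l := by
      have h1 : k.choose (j + 1) * (j + 1) = k.choose j * (k - j) :=
        Nat.choose_succ_right_eq k j
      have h2 : m * (j + 1) ≤ (k - j) * l := by
        have : k - j = m + (l - j) := by omega
        rw [this, add_mul]
        have : m * (j+1) ≤ m * l := Nat.mul_le_mul_left m (by omega)
        omega
      have := Nat.mul_le_mul_left (k.choose j) h2
      rw [← mul_assoc, ← mul_assoc, ← h1] at this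
      exact Nat.le_of_mul_le_mul_right (by
        calc k.choose j * m * (j+1) ≤ k.choose (j+1) * l * (j+1) := by
              nlinarith [this] ) (Nat.succ_pos j)
    calc t j = (k.choose j * m) * (l ^ j * m ^ (k - (j+1))) := by
          simp only [ht]
          have : k - j = (k - (j+1)) + 1 := by omega
          rw [this, pow_succ]; ring
      _ ≤ (k.choose (j+1) * l) * (l ^ j * m ^ (k - (j+1))) :=
          Nat.mul_le_mul_right _ hkey
      _ = t (j + 1) := by simp only [ht, pow_succ]; ring
  have step_down : ∀ j, l ≤ j → j < k → t (j + 1) ≤ t j := by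
    intro j hj hjk
    have hkey : k.choose (j + 1) * l ≤ k.choose j * m := by
      have h1 : k.choose (j + 1) * (j + 1) = k.choose j * (k - j) :=
        Nat.choose_succ_right_eq k j
      have h2 : (k - j) * l ≤ m * (j + 1) := by
        have hkj : k - j ≤ m := by omega
        calc (k - j) * l ≤ m * l := Nat.mul_le_mul_right l hkj
          _ ≤ m * (j + 1) := Nat.mul_le_mul_left m (by omega)
      have := Nat.mul_le_mul_left (k.choose j) h2
      rw [← mul_assoc, ← h1] at this
      exact Nat.le_of_mul_le_mul_right (by nlinarith [this]) (Nat.succ_pos j)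
    calc t (j+1) = (k.choose (j+1) * l) * (l ^ j * m ^ (k - (j+1))) := by
          simp only [ht, pow_succ]; ring
      _ ≤ (k.choose j * m) * (l ^ j * m ^ (k - (j+1))) := Nat.mul_le_mul_right _ hkey
      _ = t j := by
          simp only [ht]
          have : k - j = (k - (j+1)) + 1 := by omega
          rw [this, pow_succ]; ring
  have up : ∀ d, ∀ j, j + d = l → t j ≤ t l := by
    intro d
    induction d with
    | zero => intro j hj; simp [← hj]
    | succ n ih =>
        intro j hj
        exact le_trans (step_up j (by omega)) (ih (j+1) (by omega))
  have down : ∀ d, l + d ≤ k → t (l + d) ≤ t l := by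
    intro d
    induction d with
    | zero => simp
    | succ n ih =>
        intro hd
        have : l + (n+1) = (l + n) + 1 := by omega
        rw [this]
        exact le_trans (step_down (l + n) (by omega) (by omega)) (ih (by omega))
  have hmax : ∀ j ≤ k, t j ≤ t l := by
    intro j hj
    rcases le_total j l with h | h
    · exact up (l - j) j (by omega)
    · have h2 := down (j - l) (by omega)
      rwa [Nat.add_sub_cancel' h] at h2
  have hsum : (l + m) ^ k = ∑ j ∈ range (k + 1), l ^ j * m ^ (k - j) * k.choose j :=
    add_pow l m k
  calc k ^ k = ∑ j ∈ range (k + 1), l ^ j * m ^ (k - j) * k.choose j := by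
        rw [← hsum, hml]
    _ ≤ ∑ _j ∈ range (k + 1), t l := by
        apply Finset.sum_le_sum
        intro j hj
        have hjk : j ≤ k := by simpa [Nat.lt_succ_iff] using hj
        calc l ^ j * m ^ (k - j) * k.choose j = t j := by simp only [ht]; ring
          _ ≤ t l := hmax j hjk
    _ = (k + 1) * t l := by rw [Finset.sum_const, card_range, smul_eq_mul]
    _ = (k + 1) * (k.choose l * l ^ l * (k - l) ^ (k - l)) := by
        simp only [ht, hm]

set_option maxHeartbeats 1600000 in
/-- Above the threshold `λ² + μ²/γ > 1`, with `q = (μ²/γ)/(λ² + μ²/γ)` and `l = ⌊qk⌋`,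
the binomial coefficient satisfies `C(k,l)² ≥ c·(λ²)^{−(k−l)}·(μ²/γ)^{−l}` for some
constant `c > 0` and all sufficiently large `k`. -/
theorem choose_sq_ge_correlation_bound
    (lam mu gam : ℝ) (hlam : 0 < lam) (hmu : 0 < mu) (hgam : 0 < gam)
    (hthr : 1 < lam ^ 2 + mu ^ 2 / gam) :
    ∃ c : ℝ, 0 < c ∧ ∃ K : ℕ, ∀ k : ℕ, K ≤ k →
      let q : ℝ := (mu ^ 2 / gam) / (lam ^ 2 + mu ^ 2 / gam)
      let l : ℕ := ⌊q * k⌋₊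
      ((k.choose l : ℝ)) ^ 2 ≥ c * ((lam ^ 2) ^ (k - l))⁻¹ * ((mu ^ 2 / gam) ^ l)⁻¹ := by
  refine ⟨1, one_pos, ?_⟩
  set a := lam ^ 2 with ha'
  set b := mu ^ 2 / gam with hb'
  have ha : 0 < a := by positivity
  have hb : 0 < b := by positivity
  set s := a + b with hs'
  have hs1 : 1 < s := hthr
  set q : ℝ := b / s with hq'
  clear_value s
  clear_value a b
  clear_value q
  have hs0 : 0 < s := lt_trans one_pos hs1
  have hq0 : 0 < q := by rw [hq']; exact div_pos hb hs0
  have hq1 : q < 1 := by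
    rw [hq', div_lt_one hs0]; linarith [hs'.ge]
  have h1q : 1 - q = a / s := by
    rw [hq']
    field_simp
    linarith [hs'.le]
  have h1q0 : 0 < 1 - q := by rw [h1q]; positivity
  have hExp : (0:ℝ) < Real.exp 4 := Real.exp_pos 4
  -- eventual bound : exp 4 * (k+1)^2 ≤ s^k
  have hsum : Summable (fun n : ℕ => (n : ℝ) ^ 2 * (1 / s) ^ n) := by
    apply summable_pow_mul_geometric_of_norm_lt_one
    rw [norm_div, norm_one, Real.norm_eq_abs, abs_of_pos hs0]
    exact (div_lt_one hs0).2 hs1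
  have hev : ∀ᶠ n : ℕ in atTop, (n : ℝ) ^ 2 * (1 / s) ^ n < 1 / (4 * Real.exp 4) :=
    hsum.tendsto_atTop_zero.eventually (gt_mem_nhds (by positivity))
  obtain ⟨K, hK⟩ := ((hev.and (eventually_ge_atTop ⌈1 / (1 - q)⌉₊)).and
    (eventually_ge_atTop 1)).exists_forall_of_atTop
  refine ⟨K, ?_⟩
  intro k hk
  obtain ⟨⟨hgeo, hkK₁⟩, hk1⟩ := hK k hk
  intro q' l
  have hqq : q' = q := rfl
  have hl' : l = ⌊q * (k : ℝ)⌋₊ := by rw [← hqq]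
  clear_value q' l
  have hk0 : (0 : ℝ) < k := by exact_mod_cast hk1
  -- basic floor facts
  have hlq : (l : ℝ) ≤ q * k := by rw [hl']; exact Nat.floor_le (by positivity)
  have hql : q * k < l + 1 := by rw [hl']; exact Nat.lt_floor_add_one _
  have hlk : l < k := by
    have : (l : ℝ) < k := lt_of_le_of_lt hlq
      (by nlinarith [mul_pos (sub_pos.2 hq1) hk0])
    exact_mod_cast this
  set m : ℕ := k - l with hm'
  have hm : (m : ℝ) = (k : ℝ) - l := by
    rw [hm']; exact_mod_cast Nat.cast_sub hlk.le
  clear_value m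
  -- u = (1-q) k
  set u : ℝ := (1 - q) * k with hu'
  clear_value u
  have hu1 : 1 ≤ u := by
    have hceil : 1 / (1 - q) ≤ ((⌈1 / (1 - q)⌉₊ : ℕ) : ℝ) := Nat.le_ceil _
    have hkc : ((⌈1 / (1 - q)⌉₊ : ℕ) : ℝ) ≤ k := by exact_mod_cast hkK₁
    rw [hu']
    calc (1 : ℝ) = (1 - q) * (1 / (1 - q)) := by field_simp
      _ ≤ (1 - q) * k := by
          exact mul_le_mul_of_nonneg_left (le_trans hceil hkc) h1q0.le
  have hu0 : 0 < u := lt_of_lt_of_le one_pos hu1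
  have hum : u ≤ (m : ℝ) := by rw [hm, hu']; nlinarith
  have hmu : (m : ℝ) ≤ u + 1 := by rw [hm, hu']; nlinarith
  have hm0 : (0 : ℝ) ≤ m := Nat.cast_nonneg m
  -- S4
  have hS4 : Real.exp 4 * ((k : ℝ) + 1) ^ 2 ≤ s ^ k := by
    have hsk : (0 : ℝ) < s ^ k := pow_pos hs0 k
    have h1 : (k : ℝ) ^ 2 / s ^ k < 1 / (4 * Real.exp 4) := by
      have : ((1:ℝ) / s) ^ k = 1 / s ^ k := by rw [div_pow, one_pow]
      rw [this, mul_one_div] at hgeo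
      exact hgeo
    rw [div_lt_div_iff₀ hsk (by positivity)] at h1
    have hk1' : (1:ℝ) ≤ k := by exact_mod_cast hk1
    have h2 : ((k:ℝ) + 1) ^ 2 ≤ 4 * (k:ℝ) ^ 2 := by nlinarith [sq_nonneg ((k:ℝ) - 1)]
    calc Real.exp 4 * ((k:ℝ) + 1) ^ 2 ≤ Real.exp 4 * (4 * (k:ℝ) ^ 2) :=
          mul_le_mul_of_nonneg_left h2 hExp.le
      _ = (k:ℝ) ^ 2 * (4 * Real.exp 4) := by ring
      _ ≤ s ^ k := by linarith [h1]
  -- S1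
  have hS1 : (l : ℝ) ^ (2 * l) * (s ^ 2 / b) ^ l ≤ (k : ℝ) ^ (2 * l) * b ^ l := by
    have hls : (l : ℝ) * s ≤ (k : ℝ) * b := by
      have hqs : q * s = b := by rw [hq']; field_simp
      nlinarith [hlq]
    have hbase : (l : ℝ) ^ 2 * (s ^ 2 / b) ≤ (k : ℝ) ^ 2 * b := by
      have h2 : ((l : ℝ) * s) ^ 2 ≤ ((k : ℝ) * b) ^ 2 :=
        pow_le_pow_left₀ (by positivity) hls 2
      calc (l : ℝ) ^ 2 * (s ^ 2 / b) = ((l : ℝ) * s) ^ 2 / b := by ring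
        _ ≤ ((k : ℝ) * b) ^ 2 / b := by gcongr
        _ = (k : ℝ) ^ 2 * b := by field_simp
    calc (l : ℝ) ^ (2 * l) * (s ^ 2 / b) ^ l = ((l : ℝ) ^ 2 * (s ^ 2 / b)) ^ l := by
          rw [mul_pow, ← pow_mul]
      _ ≤ ((k : ℝ) ^ 2 * b) ^ l := pow_le_pow_left₀ (by positivity) hbase l
      _ = (k : ℝ) ^ (2 * l) * b ^ l := by rw [mul_pow, ← pow_mul]
  -- S2
  have hS2 : (m : ℝ) ^ (2 * m) * (s ^ 2 / a) ^ m
      ≤ Real.exp 4 * ((k : ℝ) ^ (2 * m) * a ^ m) := by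
    have hkey : (m : ℝ) ^ 2 * (s ^ 2 / a) = ((m : ℝ) / u) ^ 2 * ((k : ℝ) ^ 2 * a) := by
      rw [hu', h1q]
      field_simp
    have hexp : ((m : ℝ) / u) ^ (2 * m) ≤ Real.exp 4 := by
      have hstep : (m : ℝ) / u ≤ Real.exp (1 / u) := by
        calc (m : ℝ) / u ≤ (u + 1) / u := by gcongr
          _ = 1 / u + 1 := by field_simp; ring
          _ ≤ Real.exp (1 / u) := Real.add_one_le_exp _
      calc ((m : ℝ) / u) ^ (2 * m) ≤ Real.exp (1 / u) ^ (2 * m) :=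
            pow_le_pow_left₀ (by positivity) hstep _
        _ = Real.exp ((2 * m) * (1 / u)) := by
            rw [← Real.exp_nat_mul]; norm_num
        _ ≤ Real.exp 4 := by
            apply Real.exp_le_exp.2
            rw [mul_one_div, div_le_iff₀ hu0]
            push_cast
            nlinarith
    calc (m : ℝ) ^ (2 * m) * (s ^ 2 / a) ^ m = ((m : ℝ) ^ 2 * (s ^ 2 / a)) ^ m := by
          rw [mul_pow, ← pow_mul]
      _ = (((m : ℝ) / u) ^ 2 * ((k : ℝ) ^ 2 * a)) ^ m := by rw [hkey]
      _ = ((m : ℝ) / u) ^ (2 * m) * ((k : ℝ) ^ 2 * a) ^ m := by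
          rw [mul_pow, ← pow_mul]
      _ ≤ Real.exp 4 * ((k : ℝ) ^ 2 * a) ^ m :=
          mul_le_mul_of_nonneg_right hexp (by positivity)
      _ = Real.exp 4 * ((k : ℝ) ^ (2 * m) * a ^ m) := by rw [mul_pow, ← pow_mul]
  -- S3
  have hS3 : s ^ k ≤ (s ^ 2 / a) ^ m * (s ^ 2 / b) ^ l := by
    have hmlk : m + l = k := by omega
    have hab : a ^ m * b ^ l ≤ s ^ k := by
      have h1 : a ^ m ≤ s ^ m := pow_le_pow_left₀ ha.le (by linarith [hs'.le]) m
      have h2 : b ^ l ≤ s ^ l := pow_le_pow_left₀ hb.le (by linarith [hs'.le]) l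
      calc a ^ m * b ^ l ≤ s ^ m * s ^ l :=
            mul_le_mul h1 h2 (by positivity) (by positivity)
        _ = s ^ k := by rw [← pow_add, hmlk]
    have heq : (s ^ 2 / a) ^ m * (s ^ 2 / b) ^ l = s ^ (2 * k) / (a ^ m * b ^ l) := by
      rw [div_pow, div_pow, div_mul_div_comm, ← pow_mul, ← pow_mul, ← pow_add]
      congr 2
      omega
    rw [heq, le_div_iff₀ (by positivity)]
    calc s ^ k * (a ^ m * b ^ l) ≤ s ^ k * s ^ k :=
          mul_le_mul_of_nonneg_left hab (by positivity)
      _ = s ^ (2 * k) := by rw [← pow_add]; congr 1; omega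
  -- positivity of l^l, m^m
  have hll : (0 : ℝ) < (l : ℝ) ^ l := by
    rcases Nat.eq_zero_or_pos l with h | h
    · simp [h]
    · exact pow_pos (by exact_mod_cast h) l
  have hmm : (0 : ℝ) < (m : ℝ) ^ m := by
    rcases Nat.eq_zero_or_pos m with h | h
    · simp [h]
    · exact pow_pos (by exact_mod_cast h) m
  -- combine to MI
  have hMI : (((k : ℝ) + 1) * (l : ℝ) ^ l * (m : ℝ) ^ m) ^ 2
      ≤ ((k : ℝ) ^ k) ^ 2 * (a ^ m * b ^ l) := by
    have step : Real.exp 4 * ((((k : ℝ) + 1) ^ 2) * ((l : ℝ) ^ (2 * l) * (m : ℝ) ^ (2 * m)))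
        ≤ Real.exp 4 * ((k : ℝ) ^ (2 * l) * (k : ℝ) ^ (2 * m) * (a ^ m * b ^ l)) := by
      calc Real.exp 4 * ((((k : ℝ) + 1) ^ 2) * ((l : ℝ) ^ (2 * l) * (m : ℝ) ^ (2 * m)))
          = (Real.exp 4 * ((k : ℝ) + 1) ^ 2) * ((l : ℝ) ^ (2 * l) * (m : ℝ) ^ (2 * m)) := by
            ring
        _ ≤ s ^ k * ((l : ℝ) ^ (2 * l) * (m : ℝ) ^ (2 * m)) :=
            mul_le_mul_of_nonneg_right hS4 (by positivity)
        _ ≤ ((s ^ 2 / a) ^ m * (s ^ 2 / b) ^ l) * ((l : ℝ) ^ (2 * l) * (m : ℝ) ^ (2 * m)) :=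
            mul_le_mul_of_nonneg_right hS3 (by positivity)
        _ = ((l : ℝ) ^ (2 * l) * (s ^ 2 / b) ^ l) * ((m : ℝ) ^ (2 * m) * (s ^ 2 / a) ^ m) := by
            ring
        _ ≤ ((k : ℝ) ^ (2 * l) * b ^ l) * (Real.exp 4 * ((k : ℝ) ^ (2 * m) * a ^ m)) := by
            apply mul_le_mul hS1 hS2 (by positivity) (by positivity)
        _ = Real.exp 4 * ((k : ℝ) ^ (2 * l) * (k : ℝ) ^ (2 * m) * (a ^ m * b ^ l)) := by ring
    have step2 := le_of_mul_le_mul_left step hExp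
    calc (((k : ℝ) + 1) * (l : ℝ) ^ l * (m : ℝ) ^ m) ^ 2
        = (((k : ℝ) + 1) ^ 2) * ((l : ℝ) ^ (2 * l) * (m : ℝ) ^ (2 * m)) := by
          rw [mul_pow, mul_pow, ← pow_mul, ← pow_mul]; ring_nf
      _ ≤ (k : ℝ) ^ (2 * l) * (k : ℝ) ^ (2 * m) * (a ^ m * b ^ l) := step2
      _ = ((k : ℝ) ^ k) ^ 2 * (a ^ m * b ^ l) := by
          rw [← pow_add, ← pow_mul]
          congr 2
          omega
  -- cast nat lemma
  have hnat := choose_entropy_lb k l hlk.le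
  rw [← hm'] at hnat
  have hC : (k : ℝ) ^ k ≤ ((k : ℝ) + 1) * ((k.choose l : ℝ) * (l : ℝ) ^ l * (m : ℝ) ^ m) := by
    exact_mod_cast hnat
  have hD : 0 < ((k : ℝ) + 1) * (l : ℝ) ^ l * (m : ℝ) ^ m :=
    mul_pos (mul_pos (by positivity) hll) hmm
  have hCD : (k : ℝ) ^ k ≤ (((k : ℝ) + 1) * (l : ℝ) ^ l * (m : ℝ) ^ m) * (k.choose l : ℝ) := by
    nlinarith [hC]
  have hfin : 1 ≤ (k.choose l : ℝ) ^ 2 * (a ^ m * b ^ l) := by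
    have h2 : ((k : ℝ) ^ k) ^ 2
        ≤ ((((k : ℝ) + 1) * (l : ℝ) ^ l * (m : ℝ) ^ m) * (k.choose l : ℝ)) ^ 2 :=
      pow_le_pow_left₀ (by positivity) hCD 2
    have h3 : (((k : ℝ) + 1) * (l : ℝ) ^ l * (m : ℝ) ^ m) ^ 2 * 1
        ≤ (((k : ℝ) + 1) * (l : ℝ) ^ l * (m : ℝ) ^ m) ^ 2
          * ((k.choose l : ℝ) ^ 2 * (a ^ m * b ^ l)) := by
      calc (((k : ℝ) + 1) * (l : ℝ) ^ l * (m : ℝ) ^ m) ^ 2 * 1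
          = (((k : ℝ) + 1) * (l : ℝ) ^ l * (m : ℝ) ^ m) ^ 2 := by ring
        _ ≤ ((k : ℝ) ^ k) ^ 2 * (a ^ m * b ^ l) := hMI
        _ ≤ ((((k : ℝ) + 1) * (l : ℝ) ^ l * (m : ℝ) ^ m) * (k.choose l : ℝ)) ^ 2
            * (a ^ m * b ^ l) := mul_le_mul_of_nonneg_right h2 (by positivity)
        _ = (((k : ℝ) + 1) * (l : ℝ) ^ l * (m : ℝ) ^ m) ^ 2
            * ((k.choose l : ℝ) ^ 2 * (a ^ m * b ^ l)) := by ring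
    exact le_of_mul_le_mul_left h3 (by positivity)
  rw [ge_iff_le, one_mul, ← mul_inv, inv_eq_one_div, div_le_iff₀ (by positivity)]
  linarith [hfin]
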